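/- arXiv:2102.02674 — 4 statements merged into one kernel-verified Lean document; each statement's English description precedes it below -/
import Mathlib

section
/- If G is a K_{r+1}-free graph with m edges, then the spectral radius of its adjacency matrix satisfies ρ(G) ≤ √(2m(1 − 1/r)). -/
/-!
Take an eigenvector `x` for `ρ` and put `s = ∑ v, x v ^ 2`. Then `ρ s = ∑ x u x v` over the `2m`
ordered pairs of adjacent vertices, so by Cauchy–Schwarz `(ρ s)² ≤ 2m ∑ x u² x v²`. The last sum is
the quadratic form of the adjacency matrix `A` at the weights `y = x² ≥ 0`, and the
Motzkin–Straus inequality bounds it by `(1 - 1/r) s²` when `G` is `K_{r+1}`-free.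

Motzkin–Straus: if two vertices `i, j` of the support of `y` are not adjacent, moving the weight of
`j` onto `i` changes the form by `2 y j ((A y) i - (A y) j)`, which is nonnegative for the right
choice of `j`. This shrinks the support, so we may assume that the support is a clique, hence of
size `k ≤ r`; then the form is at most `(∑ y)² - ∑ y²` and `∑ y² ≥ (∑ y)² / k`.
-/

open Finset

/-- Real adjacency matrix of a simple graph. -/
noncomputable def adjMat {V : Type*} [Fintype V] (G : SimpleGraph V) : Matrix V V ℝ :=
  Matrix.of fun i j => haveI := Classical.dec (G.Adj i j); if G.Adj i j then (1 : ℝ) else 0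

/-- `μ` is an eigenvalue of the adjacency matrix of `G`. -/
def IsAdjEigenvalue {V : Type*} [Fintype V] (G : SimpleGraph V) (μ : ℝ) : Prop :=
  ∃ x : V → ℝ, x ≠ 0 ∧ (adjMat G).mulVec x = μ • x

/-- `ρ` is the spectral radius (largest adjacency eigenvalue) of `G`. -/
def IsSpecRad {V : Type*} [Fintype V] (G : SimpleGraph V) (ρ : ℝ) : Prop :=
  IsAdjEigenvalue G ρ ∧ ∀ μ : ℝ, IsAdjEigenvalue G μ → μ ≤ ρ

/-- `G` contains a copy of `F` as a subgraph. -/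
def Contains {V W : Type*} (G : SimpleGraph V) (F : SimpleGraph W) : Prop :=
  ∃ f : W → V, Function.Injective f ∧ ∀ a b, F.Adj a b → G.Adj (f a) (f b)

/-- `G` contains a cycle of length `t`. -/
def HasCycleLen {V : Type*} (G : SimpleGraph V) (t : ℕ) : Prop :=
  ∃ (v : V) (w : G.Walk v v), w.IsCycle ∧ w.length = t

open Matrix

theorem adjMat_eq_adjMatrix {V : Type*} [Fintype V] (G : SimpleGraph V) [DecidableRel G.Adj] :
    adjMat G = G.adjMatrix ℝ := by
  ext u v
  simp only [adjMat, of_apply, SimpleGraph.adjMatrix_apply]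
  congr

theorem Matrix.IsSymm.dotProduct_mulVec_add_single_sub_single {n α : Type*} [Fintype n]
    [DecidableEq n] [CommRing α] {A : Matrix n n α} (hA : A.IsSymm) (y : n → α) (i j : n)
    (c : α) :
    (y + (Pi.single i c - Pi.single j c)) ⬝ᵥ A *ᵥ (y + (Pi.single i c - Pi.single j c)) =
      y ⬝ᵥ A *ᵥ y + 2 * c * ((A *ᵥ y) i - (A *ᵥ y) j) +
        c ^ 2 * (A i i + A j j - 2 * A i j) := by
  have hleft : ∀ k, y ⬝ᵥ A *ᵥ Pi.single k c = (A *ᵥ y) k * c := fun k ↦ by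
    rw [dotProduct_mulVec, ← mulVec_transpose, hA.eq, dotProduct_single]
  simp only [mulVec_add, mulVec_sub, add_dotProduct, dotProduct_add, sub_dotProduct,
    dotProduct_sub, hleft]
  simp only [single_dotProduct, mulVec_single, Pi.smul_apply, col_apply, op_smul_eq_mul,
    hA.apply j i]
  ring

namespace SimpleGraph

variable {V : Type*} {G : SimpleGraph V}

theorem IsClique.card_le_of_cliqueFree {s : Finset V} (hs : G.IsClique (s : Set V)) {n : ℕ}
    (hG : G.CliqueFree (n + 1)) : #s ≤ n := by
  by_contra! h
  obtain ⟨t, hts, ht⟩ := exists_subset_card_eq h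
  exact hG t ⟨hs.subset (coe_subset.2 hts), ht⟩

variable (G) [Fintype V] [DecidableRel G.Adj]

theorem dotProduct_mulVec_adjMatrix_eq_sum_adj {α : Type*} [NonAssocSemiring α] (x y : V → α) :
    x ⬝ᵥ G.adjMatrix α *ᵥ y = ∑ p ∈ univ.filter (fun (u, v) ↦ G.Adj u v), x p.1 * y p.2 := by
  simp [dotProduct_mulVec_adjMatrix, sum_filter, Fintype.sum_prod_type]

theorem sq_dotProduct_mulVec_adjMatrix_le {α : Type*} [CommRing α] [LinearOrder α]
    [IsStrictOrderedRing α] (x : V → α) :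
    (x ⬝ᵥ G.adjMatrix α *ᵥ x) ^ 2 ≤ 2 * #G.edgeFinset * (x ^ 2 ⬝ᵥ G.adjMatrix α *ᵥ x ^ 2) := by
  have hcard : (2 * #G.edgeFinset : α) = #(univ.filter fun (u, v) ↦ G.Adj u v) :=
    mod_cast G.two_mul_card_edgeFinset
  rw [dotProduct_mulVec_adjMatrix_eq_sum_adj, dotProduct_mulVec_adjMatrix_eq_sum_adj, hcard]
  refine sq_sum_le_card_mul_sum_sq.trans_eq ?_
  simp [mul_pow]

theorem dotProduct_mulVec_adjMatrix_add_sum_sq_le {α : Type*} [CommRing α] [LinearOrder α]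
    [IsStrictOrderedRing α] {y : V → α} (hy : 0 ≤ y) :
    y ⬝ᵥ G.adjMatrix α *ᵥ y + ∑ v, y v ^ 2 ≤ (∑ v, y v) ^ 2 := by
  classical
  rw [dotProduct_mulVec_adjMatrix, sq, sum_mul_sum, ← sum_add_distrib]
  refine sum_le_sum fun u _ ↦ ?_
  rw [show y u ^ 2 = ∑ v, if u = v then y u * y v else 0 by simp [sq], ← sum_add_distrib]
  refine sum_le_sum fun v _ ↦ ?_
  by_cases huv : u = v
  · simp [huv]
  · have := mul_nonneg (hy u) (hy v)
    split_ifs <;> simp_all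

theorem sq_sum_div_le_sum_sq_of_card_support_le {ι α : Type*} [Fintype ι] [Field α]
    [LinearOrder α] [IsStrictOrderedRing α] {y : ι → α} {k : ℕ} (hk : #{i | y i ≠ 0} ≤ k) :
    (∑ i, y i) ^ 2 / k ≤ ∑ i, y i ^ 2 := by
  rcases k.eq_zero_or_pos with rfl | hk0
  · simpa using sum_nonneg fun i _ ↦ sq_nonneg (y i)
  rw [div_le_iff₀' (by exact_mod_cast hk0), ← sum_filter_ne_zero,
    ← sum_filter_ne_zero (f := (y · ^ 2))]
  simp only [ne_eq, pow_eq_zero_iff two_ne_zero]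
  exact sq_sum_le_card_mul_sum_sq.trans (by gcongr)

theorem dotProduct_mulVec_adjMatrix_le_of_card_support_le {y : V → ℝ} (hy : 0 ≤ y) {k : ℕ}
    (hk : #{v | y v ≠ 0} ≤ k) : y ⬝ᵥ G.adjMatrix ℝ *ᵥ y ≤ (1 - 1 / k) * (∑ v, y v) ^ 2 := by
  have := G.dotProduct_mulVec_adjMatrix_add_sum_sq_le hy
  have := sq_sum_div_le_sum_sq_of_card_support_le hk
  rw [sub_mul, one_mul, one_div_mul_eq_div]
  linarith

theorem exists_card_support_lt_of_not_adj {y : V → ℝ} (hy : 0 ≤ y) {i j : V} (hij : i ≠ j)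
    (hadj : ¬G.Adj i j) (hi : y i ≠ 0) (hj : y j ≠ 0) :
    ∃ y' : V → ℝ, 0 ≤ y' ∧ ∑ v, y' v = ∑ v, y v ∧ #{v | y' v ≠ 0} < #{v | y v ≠ 0} ∧
      y ⬝ᵥ G.adjMatrix ℝ *ᵥ y ≤ y' ⬝ᵥ G.adjMatrix ℝ *ᵥ y' := by
  classical
  have hy₀ : ∀ v, 0 ≤ y v := hy
  wlog hle : (G.adjMatrix ℝ *ᵥ y) j ≤ (G.adjMatrix ℝ *ᵥ y) i generalizing i j
  · exact this hij.symm (fun h ↦ hadj h.symm) hj hi (le_of_not_ge hle)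
  set y' := y + (Pi.single i (y j) - Pi.single j (y j)) with hy'
  have hy'_apply : ∀ v, y' v = if v = j then 0 else if v = i then y i + y j else y v := by
    intro v
    rcases eq_or_ne v j with rfl | hvj
    · simp [hy', hij.symm]
    rcases eq_or_ne v i with rfl | hvi
    · simp [hy', hvj]
    · simp [hy', hvi, hvj]
  refine ⟨y', fun v ↦ ?_, ?_, ?_, ?_⟩
  · rw [Pi.zero_apply, hy'_apply]
    split_ifs
    exacts [le_rfl, add_nonneg (hy₀ i) (hy₀ j), hy₀ v]
  · simp [hy', sum_add_distrib]
  · refine card_lt_card ⟨fun v hv ↦ ?_, fun h ↦ ?_⟩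
    · simp only [mem_filter, mem_univ, true_and, hy'_apply] at hv ⊢
      split_ifs at hv with hvj hvi <;> simp_all
    · have := h (by simpa using hj)
      simp [hy'_apply] at this
  · rw [hy', (G.isSymm_adjMatrix (α := ℝ)).dotProduct_mulVec_add_single_sub_single]
    simp only [adjMatrix_apply, G.irrefl, hadj, if_false]
    nlinarith [mul_nonneg (hy j) (sub_nonneg.2 hle)]

variable {G} in
theorem CliqueFree.dotProduct_mulVec_adjMatrix_le {r : ℕ} (hG : G.CliqueFree (r + 1)) {y : V → ℝ}
    (hy : 0 ≤ y) : y ⬝ᵥ G.adjMatrix ℝ *ᵥ y ≤ (1 - 1 / r) * (∑ v, y v) ^ 2 := by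
  induction hn : #{v | y v ≠ 0} using Nat.strong_induction_on generalizing y with
  | _ n ih =>
  by_cases hclique : G.IsClique ({v | y v ≠ 0} : Finset V)
  · exact G.dotProduct_mulVec_adjMatrix_le_of_card_support_le hy (hclique.card_le_of_cliqueFree hG)
  simp only [IsClique, Set.Pairwise, coe_filter, mem_univ, true_and, Set.mem_ofPred_eq,
    not_forall] at hclique
  obtain ⟨i, hi, j, hj, hij, hadj⟩ := hclique
  obtain ⟨y', hy', hsum, hcard, hle⟩ := G.exists_card_support_lt_of_not_adj hy hij hadj hi hj
  calc y ⬝ᵥ G.adjMatrix ℝ *ᵥ y ≤ y' ⬝ᵥ G.adjMatrix ℝ *ᵥ y' := hle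
    _ ≤ (1 - 1 / r) * (∑ v, y' v) ^ 2 := ih _ (hn ▸ hcard) hy' rfl
    _ = (1 - 1 / r) * (∑ v, y v) ^ 2 := by rw [hsum]

end SimpleGraph

theorem stmt0_general {V : Type*} [Fintype V] (G : SimpleGraph V) (r m : ℕ)
    (hfree : G.CliqueFree (r + 1)) (hm : Nat.card G.edgeSet = m)
    (ρ : ℝ) (hρ : IsSpecRad G ρ) :
    ρ ≤ Real.sqrt (2 * m * (1 - 1 / (r : ℝ))) := by
  classical
  obtain ⟨⟨x, hx0, hx⟩, -⟩ := hρ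
  rw [adjMat_eq_adjMatrix] at hx
  set s := ∑ v, (x ^ 2) v
  have hs : 0 < s := by
    obtain ⟨v, hv⟩ := Function.ne_iff.1 hx0
    exact sum_pos' (fun v _ ↦ sq_nonneg (x v)) ⟨v, mem_univ v, sq_pos_of_ne_zero hv⟩
  have hquad : x ⬝ᵥ G.adjMatrix ℝ *ᵥ x = ρ * s := by
    rw [hx, dotProduct_smul, smul_eq_mul]
    simp [s, dotProduct, sq]
  have hedges : (#G.edgeFinset : ℝ) = m := by
    rw [← hm, Nat.card_eq_fintype_card, SimpleGraph.edgeFinset_card]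
  have key : (ρ * s) ^ 2 ≤ 2 * m * (1 - 1 / (r : ℝ)) * s ^ 2 :=
    calc (ρ * s) ^ 2 ≤ 2 * #G.edgeFinset * (x ^ 2 ⬝ᵥ G.adjMatrix ℝ *ᵥ x ^ 2) :=
          hquad ▸ G.sq_dotProduct_mulVec_adjMatrix_le x
      _ ≤ 2 * #G.edgeFinset * ((1 - 1 / r) * s ^ 2) := by
          gcongr
          exact hfree.dotProduct_mulVec_adjMatrix_le fun v ↦ sq_nonneg (x v)
      _ = 2 * m * (1 - 1 / (r : ℝ)) * s ^ 2 := by rw [hedges]; ring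
  refine Real.le_sqrt_of_sq_le (le_of_mul_le_mul_right ?_ (pow_pos hs 2))
  linarith [mul_pow ρ s 2]

theorem stmt0 {V : Type*} [Fintype V] (G : SimpleGraph V) (r m : ℕ) (hr : 1 ≤ r)
    (hfree : G.CliqueFree (r + 1)) (hm : Nat.card G.edgeSet = m)
    (hiso : ∀ v : V, ∃ u, G.Adj v u)
    (ρ : ℝ) (hρ : IsSpecRad G ρ) :
    ρ ≤ Real.sqrt (2 * m * (1 - 1 / (r : ℝ))) :=
  stmt0_general G r m hfree hm ρ hρ
end

section
/- If G is a triangle-free graph with m edges, then ρ(G) ≤ √m. -/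
open Finset

open Classical in
lemma eig_sq_le {V : Type*} [Fintype V] (G : SimpleGraph V) (m : ℕ)
    (hfree : G.CliqueFree 3) (hm : Nat.card G.edgeSet = m)
    (μ : ℝ) (hμ : IsAdjEigenvalue G μ) : μ^2 ≤ m := by
  classical
  obtain ⟨x, hx0, hAx⟩ := hμ
  obtain ⟨v0, hv0⟩ : ∃ v, x v ≠ 0 := by
    by_contra h
    push_neg at h
    exact hx0 (funext fun v => h v)
  have hne : Nonempty V := ⟨v0⟩
  obtain ⟨u, -, hu⟩ := Finset.exists_max_image Finset.univ (fun v => |x v|) ⟨v0, Finset.mem_univ _⟩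
  have hxu : 0 < |x u| := lt_of_lt_of_le (abs_pos.mpr hv0) (hu v0 (Finset.mem_univ _))
  have h2 : (adjMat G).mulVec ((adjMat G).mulVec x) = (μ^2) • x := by
    rw [hAx, Matrix.mulVec_smul, hAx, smul_smul]; ring_nf
  have key : μ^2 * x u = ∑ v, ∑ w, adjMat G u v * (adjMat G v w * x w) := by
    have := congrFun h2 u
    simp only [Matrix.mulVec, dotProduct, Pi.smul_apply, smul_eq_mul] at this
    rw [← this]
    rw [Finset.sum_congr rfl fun v _ => (Finset.mul_sum _ _ _)]
  have hA01 : ∀ a b : V, adjMat G a b = (if G.Adj a b then (1:ℝ) else 0) := by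
    intro a b; rfl
  have hAnn : ∀ a b : V, 0 ≤ adjMat G a b := by
    intro a b; rw [hA01]; split_ifs <;> norm_num
  set S : Finset (V × V) := Finset.univ.filter (fun p => G.Adj u p.1 ∧ G.Adj p.1 p.2) with hS
  have hsum : ∑ v, ∑ w, adjMat G u v * adjMat G v w = (S.card : ℝ) := by
    rw [← Finset.sum_product']
    simp only [hA01, ite_mul, one_mul, zero_mul, mul_ite, mul_one, mul_zero, ← ite_and]
    rw [Finset.sum_boole, hS, ← Finset.univ_product_univ]
    congr 2
    apply Finset.filter_congr
    intro p _
    constructor <;> (intro h; exact ⟨h.2, h.1⟩)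
  have hcard : S.card ≤ m := by
    have hinj : Set.InjOn (fun p : V × V => s(p.1, p.2)) S := by
      intro p hp q hq hpq
      simp only [hS, Finset.coe_filter, Set.mem_setOf_eq, Finset.mem_univ, true_and] at hp hq
      rw [Sym2.eq_iff] at hpq
      rcases hpq with ⟨h1, h2⟩ | ⟨h1, h2⟩
      · exact Prod.ext h1 h2
      · exfalso
        apply hfree {u, p.1, p.2}
        rw [SimpleGraph.is3Clique_triple_iff]
        refine ⟨hp.1, ?_, hp.2⟩
        rw [h2]
        exact hq.1
    have hmaps : ∀ p ∈ S, s(p.1, p.2) ∈ G.edgeFinset := by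
      intro p hp
      simp only [hS, Finset.mem_filter] at hp
      rw [SimpleGraph.mem_edgeFinset]
      exact hp.2.2
    have h3 := Finset.card_le_card_of_injOn _ hmaps hinj
    have h4 : m = G.edgeFinset.card := by
      rw [← hm, SimpleGraph.edgeFinset, Nat.card_eq_card_toFinset]
    omega
  have habs : μ^2 * |x u| ≤ (S.card : ℝ) * |x u| := by
    have h1 : μ^2 * |x u| = |μ^2 * x u| := by
      rw [abs_mul, abs_of_nonneg (sq_nonneg μ)]
    rw [h1, key]
    calc |∑ v, ∑ w, adjMat G u v * (adjMat G v w * x w)|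
        ≤ ∑ v, |∑ w, adjMat G u v * (adjMat G v w * x w)| :=
          Finset.abs_sum_le_sum_abs _ _
      _ ≤ ∑ v, ∑ w, |adjMat G u v * (adjMat G v w * x w)| :=
          Finset.sum_le_sum fun v _ => Finset.abs_sum_le_sum_abs _ _
      _ ≤ ∑ v, ∑ w, adjMat G u v * (adjMat G v w * |x u|) := by
          refine Finset.sum_le_sum fun v _ => Finset.sum_le_sum fun w _ => ?_
          rw [abs_mul, abs_mul, abs_of_nonneg (hAnn u v), abs_of_nonneg (hAnn v w)]
          exact mul_le_mul_of_nonneg_left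
            (mul_le_mul_of_nonneg_left (hu w (Finset.mem_univ w)) (hAnn v w)) (hAnn u v)
      _ = (∑ v, ∑ w, adjMat G u v * adjMat G v w) * |x u| := by
          rw [Finset.sum_mul]
          refine Finset.sum_congr rfl fun v _ => ?_
          rw [Finset.sum_mul]
          refine Finset.sum_congr rfl fun w _ => ?_
          ring
      _ = (S.card : ℝ) * |x u| := by rw [hsum]
  have := le_of_mul_le_mul_right habs hxu
  calc μ^2 ≤ (S.card : ℝ) := this
    _ ≤ m := by exact_mod_cast hcard

theorem stmt1 {V : Type*} [Fintype V] (G : SimpleGraph V) (m : ℕ)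
    (hfree : G.CliqueFree 3) (hm : Nat.card G.edgeSet = m)
    (ρ : ℝ) (hρ : IsSpecRad G ρ) :
    ρ ≤ Real.sqrt m := by
  have h := eig_sq_le G m hfree hm ρ hρ.1
  calc ρ ≤ |ρ| := le_abs_self ρ
    _ = Real.sqrt (ρ^2) := (Real.sqrt_sq_eq_abs ρ).symm
    _ ≤ Real.sqrt m := Real.sqrt_le_sqrt h
end

section
/- For each pair (n,k) ∈ {(9,1), (8,2), (7,3)}, the graph S_n^k has exactly 9 edges and spectral radius exactly 3. -/
open Finset

/-- `Snk n k` : the star `K_{1,n-1}` (centered at `0`) plus `k` disjoint edges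
`(2j+1, 2j+2)`, `j < k`, inside its independent set. -/
def Snk (n k : ℕ) : SimpleGraph (Fin n) :=
  SimpleGraph.fromRel (fun a b =>
    (a : ℕ) = 0 ∨ ∃ j, j < k ∧ (a : ℕ) = 2 * j + 1 ∧ (b : ℕ) = 2 * j + 2)

instance snkDecAdj (n k : ℕ) : DecidableRel (Snk n k).Adj := fun a b => by
  unfold Snk SimpleGraph.fromRel; exact instDecidableAnd

lemma adjMat_apply {V : Type*} [Fintype V] (G : SimpleGraph V) [DecidableRel G.Adj] (i j : V) :
    adjMat G i j = if G.Adj i j then (1 : ℝ) else 0 := by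
  unfold adjMat; simp only [Matrix.of_apply]; congr 1

lemma sum9 (f : Fin 9 → ℝ) : ∑ i, f i = f 0 + f 1 + f 2 + f 3 + f 4 + f 5 + f 6 + f 7 + f 8 := by
  simp [Fin.sum_univ_succ, show (Fin.succ 2 : Fin 9) = 3 from rfl,
    show ((Fin.succ 2).succ : Fin 9) = 4 from rfl,
    show ((Fin.succ 2).succ.succ : Fin 9) = 5 from rfl,
    show ((Fin.succ 2).succ.succ.succ : Fin 9) = 6 from rfl,
    show ((Fin.succ 2).succ.succ.succ.succ : Fin 9) = 7 from rfl,
    show ((Fin.succ 2).succ.succ.succ.succ.succ : Fin 9) = 8 from rfl]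
  ring

lemma sum8 (f : Fin 8 → ℝ) : ∑ i, f i = f 0 + f 1 + f 2 + f 3 + f 4 + f 5 + f 6 + f 7 := by
  simp [Fin.sum_univ_succ, show (Fin.succ 2 : Fin 8) = 3 from rfl,
    show ((Fin.succ 2).succ : Fin 8) = 4 from rfl,
    show ((Fin.succ 2).succ.succ : Fin 8) = 5 from rfl,
    show ((Fin.succ 2).succ.succ.succ : Fin 8) = 6 from rfl,
    show ((Fin.succ 2).succ.succ.succ.succ : Fin 8) = 7 from rfl]
  ring

lemma sum7 (f : Fin 7 → ℝ) : ∑ i, f i = f 0 + f 1 + f 2 + f 3 + f 4 + f 5 + f 6 := by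
  simp [Fin.sum_univ_succ, show (Fin.succ 2 : Fin 7) = 3 from rfl,
    show ((Fin.succ 2).succ : Fin 7) = 4 from rfl,
    show ((Fin.succ 2).succ.succ : Fin 7) = 5 from rfl,
    show ((Fin.succ 2).succ.succ.succ : Fin 7) = 6 from rfl]
  ring

set_option maxHeartbeats 1000000

theorem stmt9 (n k : ℕ)
    (h : (n, k) = (9, 1) ∨ (n, k) = (8, 2) ∨ (n, k) = (7, 3)) :
    Nat.card (Snk n k).edgeSet = 9 ∧ IsSpecRad (Snk n k) 3 := by
  rcases h with h | h | h <;> simp only [Prod.mk.injEq] at h <;>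
    obtain ⟨rfl, rfl⟩ := h
  · refine ⟨by rw [Nat.card_eq_fintype_card, ← Set.toFinset_card]; decide, ?_, ?_⟩
    · refine ⟨![6,3,3,2,2,2,2,2,2], ?_, ?_⟩
      · intro hz; have := congrFun hz 0; norm_num at this
      · funext i
        fin_cases i <;>
          · simp (config := { decide := true }) [Matrix.mulVec, dotProduct, sum9,
              adjMat_apply, Pi.smul_apply, smul_eq_mul,
              show (![6,3,3,2,2,2,2,2,2] : Fin 9 → ℝ) 3 = 2 from rfl,
              show (![6,3,3,2,2,2,2,2,2] : Fin 9 → ℝ) 4 = 2 from rfl,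
              show (![6,3,3,2,2,2,2,2,2] : Fin 9 → ℝ) 5 = 2 from rfl,
              show (![6,3,3,2,2,2,2,2,2] : Fin 9 → ℝ) 6 = 2 from rfl,
              show (![6,3,3,2,2,2,2,2,2] : Fin 9 → ℝ) 7 = 2 from rfl,
              show (![6,3,3,2,2,2,2,2,2] : Fin 9 → ℝ) 8 = 2 from rfl]
            norm_num
    · rintro μ ⟨x, hne, hx⟩
      have e0 := congrFun hx 0
      have e1 := congrFun hx 1
      have e2 := congrFun hx 2
      have e3 := congrFun hx 3
      have e4 := congrFun hx 4
      have e5 := congrFun hx 5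
      have e6 := congrFun hx 6
      have e7 := congrFun hx 7
      have e8 := congrFun hx 8
      simp (config := { decide := true }) [Matrix.mulVec, dotProduct, sum9,
        adjMat_apply] at e0 e1 e2 e3 e4 e5 e6 e7 e8
      set S := x 0^2 + x 1^2 + x 2^2 + x 3^2 + x 4^2 + x 5^2 + x 6^2 + x 7^2 + x 8^2 with hSdef
      have key : (3 - μ) * S = (x 1 + x 2 - x 0)^2 + 2*(x 1 - x 2)^2 + 3*(x 3 - x 0/3)^2 + 3*(x 4 - x 0/3)^2 + 3*(x 5 - x 0/3)^2 + 3*(x 6 - x 0/3)^2 + 3*(x 7 - x 0/3)^2 + 3*(x 8 - x 0/3)^2 := by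
        linear_combination x 0 * e0 + x 1 * e1 + x 2 * e2 + x 3 * e3 + x 4 * e4 + x 5 * e5 + x 6 * e6 + x 7 * e7 + x 8 * e8
      have hex : ∃ i, x i ≠ 0 := by
        by_contra hc; push_neg at hc; exact hne (funext fun i => hc i)
      obtain ⟨i, hi⟩ := hex
      have hi2 : 0 < x i ^ 2 := lt_of_le_of_ne (sq_nonneg _) (Ne.symm (pow_ne_zero 2 hi))
      have hS : 0 < S := by
        fin_cases i <;>
          simp only [show (⟨0, by omega⟩ : Fin 9) = 0 from rfl, show (⟨1, by omega⟩ : Fin 9) = 1 from rfl, show (⟨2, by omega⟩ : Fin 9) = 2 from rfl, show (⟨3, by omega⟩ : Fin 9) = 3 from rfl, show (⟨4, by omega⟩ : Fin 9) = 4 from rfl, show (⟨5, by omega⟩ : Fin 9) = 5 from rfl, show (⟨6, by omega⟩ : Fin 9) = 6 from rfl, show (⟨7, by omega⟩ : Fin 9) = 7 from rfl, show (⟨8, by omega⟩ : Fin 9) = 8 from rfl] at hi2 <;>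
          linarith [sq_nonneg (x 0), sq_nonneg (x 1), sq_nonneg (x 2), sq_nonneg (x 3), sq_nonneg (x 4), sq_nonneg (x 5), sq_nonneg (x 6), sq_nonneg (x 7), sq_nonneg (x 8)]
      have hpos : 0 ≤ (3 - μ) * S := by rw [key]; positivity
      by_contra hcon
      push_neg at hcon
      have hneg : (3 - μ) * S < 0 := mul_neg_of_neg_of_pos (by linarith) hS
      linarith
  · refine ⟨by rw [Nat.card_eq_fintype_card, ← Set.toFinset_card]; decide, ?_, ?_⟩
    · refine ⟨![6,3,3,3,3,2,2,2], ?_, ?_⟩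
      · intro hz; have := congrFun hz 0; norm_num at this
      · funext i
        fin_cases i <;>
          · simp (config := { decide := true }) [Matrix.mulVec, dotProduct, sum8,
              adjMat_apply, Pi.smul_apply, smul_eq_mul,
              show (![6,3,3,3,3,2,2,2] : Fin 8 → ℝ) 3 = 3 from rfl,
              show (![6,3,3,3,3,2,2,2] : Fin 8 → ℝ) 4 = 3 from rfl,
              show (![6,3,3,3,3,2,2,2] : Fin 8 → ℝ) 5 = 2 from rfl,
              show (![6,3,3,3,3,2,2,2] : Fin 8 → ℝ) 6 = 2 from rfl,
              show (![6,3,3,3,3,2,2,2] : Fin 8 → ℝ) 7 = 2 from rfl]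
            norm_num
    · rintro μ ⟨x, hne, hx⟩
      have e0 := congrFun hx 0
      have e1 := congrFun hx 1
      have e2 := congrFun hx 2
      have e3 := congrFun hx 3
      have e4 := congrFun hx 4
      have e5 := congrFun hx 5
      have e6 := congrFun hx 6
      have e7 := congrFun hx 7
      simp (config := { decide := true }) [Matrix.mulVec, dotProduct, sum8,
        adjMat_apply] at e0 e1 e2 e3 e4 e5 e6 e7
      set S := x 0^2 + x 1^2 + x 2^2 + x 3^2 + x 4^2 + x 5^2 + x 6^2 + x 7^2 with hSdef
      have key : (3 - μ) * S = (x 1 + x 2 - x 0)^2 + 2*(x 1 - x 2)^2 + (x 3 + x 4 - x 0)^2 + 2*(x 3 - x 4)^2 + 3*(x 5 - x 0/3)^2 + 3*(x 6 - x 0/3)^2 + 3*(x 7 - x 0/3)^2 := by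
        linear_combination x 0 * e0 + x 1 * e1 + x 2 * e2 + x 3 * e3 + x 4 * e4 + x 5 * e5 + x 6 * e6 + x 7 * e7
      have hex : ∃ i, x i ≠ 0 := by
        by_contra hc; push_neg at hc; exact hne (funext fun i => hc i)
      obtain ⟨i, hi⟩ := hex
      have hi2 : 0 < x i ^ 2 := lt_of_le_of_ne (sq_nonneg _) (Ne.symm (pow_ne_zero 2 hi))
      have hS : 0 < S := by
        fin_cases i <;>
          simp only [show (⟨0, by omega⟩ : Fin 8) = 0 from rfl, show (⟨1, by omega⟩ : Fin 8) = 1 from rfl, show (⟨2, by omega⟩ : Fin 8) = 2 from rfl, show (⟨3, by omega⟩ : Fin 8) = 3 from rfl, show (⟨4, by omega⟩ : Fin 8) = 4 from rfl, show (⟨5, by omega⟩ : Fin 8) = 5 from rfl, show (⟨6, by omega⟩ : Fin 8) = 6 from rfl, show (⟨7, by omega⟩ : Fin 8) = 7 from rfl] at hi2 <;>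
          linarith [sq_nonneg (x 0), sq_nonneg (x 1), sq_nonneg (x 2), sq_nonneg (x 3), sq_nonneg (x 4), sq_nonneg (x 5), sq_nonneg (x 6), sq_nonneg (x 7)]
      have hpos : 0 ≤ (3 - μ) * S := by rw [key]; positivity
      by_contra hcon
      push_neg at hcon
      have hneg : (3 - μ) * S < 0 := mul_neg_of_neg_of_pos (by linarith) hS
      linarith
  · refine ⟨by rw [Nat.card_eq_fintype_card, ← Set.toFinset_card]; decide, ?_, ?_⟩
    · refine ⟨![2,1,1,1,1,1,1], ?_, ?_⟩
      · intro hz; have := congrFun hz 0; norm_num at this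
      · funext i
        fin_cases i <;>
          · simp (config := { decide := true }) [Matrix.mulVec, dotProduct, sum7,
              adjMat_apply, Pi.smul_apply, smul_eq_mul,
              show (![2,1,1,1,1,1,1] : Fin 7 → ℝ) 3 = 1 from rfl,
              show (![2,1,1,1,1,1,1] : Fin 7 → ℝ) 4 = 1 from rfl,
              show (![2,1,1,1,1,1,1] : Fin 7 → ℝ) 5 = 1 from rfl,
              show (![2,1,1,1,1,1,1] : Fin 7 → ℝ) 6 = 1 from rfl]
            norm_num
    · rintro μ ⟨x, hne, hx⟩
      have e0 := congrFun hx 0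
      have e1 := congrFun hx 1
      have e2 := congrFun hx 2
      have e3 := congrFun hx 3
      have e4 := congrFun hx 4
      have e5 := congrFun hx 5
      have e6 := congrFun hx 6
      simp (config := { decide := true }) [Matrix.mulVec, dotProduct, sum7,
        adjMat_apply] at e0 e1 e2 e3 e4 e5 e6
      set S := x 0^2 + x 1^2 + x 2^2 + x 3^2 + x 4^2 + x 5^2 + x 6^2 with hSdef
      have key : (3 - μ) * S = (x 1 + x 2 - x 0)^2 + 2*(x 1 - x 2)^2 + (x 3 + x 4 - x 0)^2 + 2*(x 3 - x 4)^2 + (x 5 + x 6 - x 0)^2 + 2*(x 5 - x 6)^2 := by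
        linear_combination x 0 * e0 + x 1 * e1 + x 2 * e2 + x 3 * e3 + x 4 * e4 + x 5 * e5 + x 6 * e6
      have hex : ∃ i, x i ≠ 0 := by
        by_contra hc; push_neg at hc; exact hne (funext fun i => hc i)
      obtain ⟨i, hi⟩ := hex
      have hi2 : 0 < x i ^ 2 := lt_of_le_of_ne (sq_nonneg _) (Ne.symm (pow_ne_zero 2 hi))
      have hS : 0 < S := by
        fin_cases i <;>
          simp only [show (⟨0, by omega⟩ : Fin 7) = 0 from rfl, show (⟨1, by omega⟩ : Fin 7) = 1 from rfl, show (⟨2, by omega⟩ : Fin 7) = 2 from rfl, show (⟨3, by omega⟩ : Fin 7) = 3 from rfl, show (⟨4, by omega⟩ : Fin 7) = 4 from rfl, show (⟨5, by omega⟩ : Fin 7) = 5 from rfl, show (⟨6, by omega⟩ : Fin 7) = 6 from rfl] at hi2 <;>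
          linarith [sq_nonneg (x 0), sq_nonneg (x 1), sq_nonneg (x 2), sq_nonneg (x 3), sq_nonneg (x 4), sq_nonneg (x 5), sq_nonneg (x 6)]
      have hpos : 0 ≤ (3 - μ) * S := by rw [key]; positivity
      by_contra hcon
      push_neg at hcon
      have hneg : (3 - μ) * S < 0 := mul_neg_of_neg_of_pos (by linarith) hS
      linarith
end

section
/- Let R_k be the graph obtained from k copies of K_4 sharing a single common vertex u, and let H_{t,0}∘R_k be obtained by attaching t pendant vertices to u. If k ≥ 1 and m = 6k + t ≥ 8, then ρ(H_{t,0}∘R_k) < (1 + √(4m−3))/2. -/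
/-!
For `μ > 2` the eigen-equations of `HR k t` can be solved outward from the hub `u`: with `a`
the hub entry, every pendant entry is `a / μ` and every triangle of a `K₄` sums to
`3a / (μ - 2)`. Hence `a = 0` forces the eigenvector to vanish, and otherwise the hub equation
gives `μ²(μ - 2) = 3kμ + t(μ - 2)`. For `r = (1 + √(4m - 3)) / 2` we have `r² = r + m - 1`, and
the cubic `μ²(μ - 2) - 3kμ - t(μ - 2)` is positive at `r` and increasing beyond it, so every
eigenvalue above `2` is smaller than `r`.
-/

open Finset

/-- `HR k t` : `k` copies of `K₄` sharing the single common vertex `Sum.inl ()`,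
together with `t` pendant vertices attached to that common vertex. -/
def HR (k t : ℕ) : SimpleGraph (Unit ⊕ (Fin k × Fin 3) ⊕ Fin t) :=
  SimpleGraph.fromRel (fun a b =>
    match a, b with
    | Sum.inl _, _ => True
    | Sum.inr (Sum.inl p), Sum.inr (Sum.inl q) => p.1 = q.1
    | _, _ => False)

open Matrix

section HR

variable {k t : ℕ} (x : Unit ⊕ (Fin k × Fin 3) ⊕ Fin t → ℝ)

lemma HR_mulVec_hub :
    (adjMat (HR k t) *ᵥ x) (Sum.inl ()) =
      ∑ p, x (Sum.inr (Sum.inl p)) + ∑ j, x (Sum.inr (Sum.inr j)) := by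
  simp [adjMat, HR, mulVec, dotProduct, Fintype.sum_sum_type]

lemma HR_mulVec_clique (i : Fin k) (j : Fin 3) :
    (adjMat (HR k t) *ᵥ x) (Sum.inr (Sum.inl (i, j))) =
      x (Sum.inl ()) + ∑ j', x (Sum.inr (Sum.inl (i, j'))) - x (Sum.inr (Sum.inl (i, j))) := by
  simp only [mulVec, dotProduct, adjMat, HR, SimpleGraph.fromRel_adj, ne_eq, of_apply,
    Fintype.sum_sum_type, univ_unique, PUnit.default_eq_unit, reduceCtorEq,
    not_false_eq_true, or_true, and_self, ↓reduceIte, one_mul, sum_singleton,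
    Sum.inr.injEq, Sum.inl.injEq, ite_mul, zero_mul, Fintype.sum_prod_type, Prod.mk.injEq,
    not_and, or_self, and_false, sum_const_zero, add_zero]
  rw [sum_eq_single i (fun i' _ hi' => by simp [Ne.symm hi', hi']) (by simp)]
  fin_cases j <;> simp [Fin.sum_univ_three] <;> ring

lemma HR_mulVec_pendant (j : Fin t) :
    (adjMat (HR k t) *ᵥ x) (Sum.inr (Sum.inr j)) = x (Sum.inl ()) := by
  simp [adjMat, HR, mulVec, dotProduct, Fintype.sum_sum_type]

end HR

theorem HR_eigenvalue_cubic {k t : ℕ} {μ : ℝ} (hμ : 2 < μ) (h : IsAdjEigenvalue (HR k t) μ) :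
    μ ^ 2 * (μ - 2) = 3 * k * μ + t * (μ - 2) := by
  obtain ⟨x, hx0, hx⟩ := h
  set a := x (Sum.inl ())
  set s : Fin k → ℝ := fun i => ∑ j, x (Sum.inr (Sum.inl (i, j)))
  have row v : (adjMat (HR k t) *ᵥ x) v = μ * x v := congrFun hx v
  have hub : μ * a = ∑ i, s i + ∑ j, x (Sum.inr (Sum.inr j)) := by
    rw [← row, HR_mulVec_hub, Fintype.sum_prod_type]
  have pendant j : μ * x (Sum.inr (Sum.inr j)) = a := by rw [← row, HR_mulVec_pendant]
  have clique i j : (μ + 1) * x (Sum.inr (Sum.inl (i, j))) = a + s i := by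
    linarith [row (Sum.inr (Sum.inl (i, j))), HR_mulVec_clique x i j]
  have clique_sum i : (μ - 2) * s i = 3 * a := by
    have hsi : s i = _ := Fin.sum_univ_three _
    linear_combination clique i 0 + clique i 1 + clique i 2 + (μ + 1) * hsi
  have ha : a ≠ 0 := by
    intro ha
    have hs i : s i = 0 := by
      have := clique_sum i
      rw [ha, mul_zero] at this
      exact (mul_eq_zero.mp this).resolve_left (by linarith)
    refine hx0 (funext fun v => ?_)
    rcases v with _ | ⟨i, j⟩ | j
    · exact ha
    · have := clique i j
      rw [ha, hs, add_zero] at this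
      exact (mul_eq_zero.mp this).resolve_left (by linarith)
    · have := pendant j
      rw [ha] at this
      exact (mul_eq_zero.mp this).resolve_left (by linarith)
  have cliques : (μ - 2) * ∑ i, s i = 3 * k * a := by
    simp only [mul_sum, clique_sum, sum_const, card_univ, Fintype.card_fin,
      nsmul_eq_mul]
    ring
  have pendants : μ * ∑ j, x (Sum.inr (Sum.inr j)) = t * a := by
    simp [mul_sum, pendant]
  apply mul_right_cancel₀ ha
  linear_combination (μ * (μ - 2)) * hub + μ * cliques + (μ - 2) * pendants

lemma sq_half_one_add_sqrt {m : ℝ} (hm : 3 / 4 ≤ m) :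
    ((1 + √(4 * m - 3)) / 2) ^ 2 = (1 + √(4 * m - 3)) / 2 + m - 1 := by
  have := Real.sq_sqrt (by linarith : 0 ≤ 4 * m - 3)
  linear_combination this / 4

lemma three_lt_half_one_add_sqrt {m : ℝ} (hm : 7 < m) : 3 < (1 + √(4 * m - 3)) / 2 := by
  have : 5 < √(4 * m - 3) := Real.lt_sqrt_of_sq_lt (by linarith)
  linarith

lemma cubic_pos_of_le {k t : ℕ} {r ρ : ℝ} (hk : 1 ≤ k) (hkt : 5 ≤ 3 * k + t)
    (hr : r ^ 2 = r + (6 * k + t) - 1) (hr3 : 3 < r) (hrρ : r ≤ ρ) :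
    3 * k * ρ + t * (ρ - 2) < ρ ^ 2 * (ρ - 2) := by
  have hk' : (1 : ℝ) ≤ k := by exact_mod_cast hk
  have hkt' : (5 : ℝ) ≤ 3 * k + t := by exact_mod_cast hkt
  -- by `hr`, the cubic `r ^ 2 * (r - 2) - 3 * k * r - t * (r - 2)` equals `(3k - 2)(r - 2) + t - 3`
  have at_r : 3 * k * r + t * (r - 2) < r ^ 2 * (r - 2) := by
    nlinarith [mul_pos (by linarith : (0 : ℝ) < 3 * k - 2) (by linarith : (0 : ℝ) < r - 3)]
  -- the increment of the cubic from `r` to `ρ` is `(ρ - r)` times this factor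
  have slope : 0 ≤ ρ ^ 2 + ρ * r + r ^ 2 - 2 * ρ - 2 * r - 3 * k - t := by nlinarith
  nlinarith [mul_nonneg (sub_nonneg.2 hrρ) slope]

theorem stmt12 (k t m : ℕ) (hk : 1 ≤ k) (hm : m = 6 * k + t) (h8 : 8 ≤ m)
    (ρ : ℝ) (hρ : IsSpecRad (HR k t) ρ) :
    ρ < (1 + Real.sqrt (4 * m - 3)) / 2 := by
  have hm8 : (8 : ℝ) ≤ m := by exact_mod_cast h8
  have hr3 := three_lt_half_one_add_sqrt (by linarith : (7 : ℝ) < m)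
  have hr := sq_half_one_add_sqrt (by linarith : (3 / 4 : ℝ) ≤ m)
  rw [hm, Nat.cast_add, Nat.cast_mul, Nat.cast_ofNat] at hr hr3 ⊢
  by_contra! hrρ
  have := HR_eigenvalue_cubic (by linarith) hρ.1
  linarith [cubic_pos_of_le hk (by omega) hr hr3 hrρ]
end
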